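/- Let S and T be balanced bitstrings. If the unit of area (x,y) is between w(S) and w(T), then the unit of area (x−y−1, 2y−x+1) is between S and T. -/

import Mathlib

/-!
Read a bitstring as a lattice path (`0` a step right, `1` a step up). Every block of `w` ends
in its only `1`, so a prefix of `w(S)` lies between the images `w(S.take k)` and
`w(S.take (k + 1))` of consecutive prefixes of `S`. The image of a prefix with `a` zeros and `b`
ones has `2a + b` zeros and `a + b` ones, and the affine map `(x, y) ↦ (x - y - 1, 2y - x + 1)`
undoes this change of coordinates, shifted so that the strict and non-strict inequalities in
`Below` and `Above` come out right.
-/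

/-- The substitution `w`, simultaneously replacing each `0` by `001` and each
`1` by `01`. -/
def wsub (S : List Bool) : List Bool :=
  S.flatMap (fun b => if b then [false, true] else [false, false, true])

/-- Two bitstrings are balanced if they have the same length and the same
number of ones. -/
def BalancedBits (S T : List Bool) : Prop :=
  S.length = T.length ∧ S.count true = T.count true

/-- `(x, y)` is below `S` if some prefix of `S` has at most `x` zeros and at
least `y + 1` ones. -/
def Below (S : List Bool) (x y : ℤ) : Prop :=
  ∃ n ≤ S.length, ((S.take n).count false : ℤ) ≤ x ∧ y + 1 ≤ ((S.take n).count true : ℤ)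

/-- `(x, y)` is above `S` if some prefix of `S` has at most `y` ones and at
least `x + 1` zeros. -/
def Above (S : List Bool) (x y : ℤ) : Prop :=
  ∃ n ≤ S.length, ((S.take n).count true : ℤ) ≤ y ∧ x + 1 ≤ ((S.take n).count false : ℤ)

/-- `(x, y)` is between `S` and `T` if it is above one and below the other. -/
def Between (S T : List Bool) (x y : ℤ) : Prop :=
  (Above S x y ∧ Below T x y) ∨ (Below S x y ∧ Above T x y)

def wsubBlock (b : Bool) : List Bool :=
  if b then [false, true] else [false, false, true]

lemma wsub_nil : wsub [] = [] := rfl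

lemma wsub_cons (b : Bool) (S : List Bool) : wsub (b :: S) = wsubBlock b ++ wsub S := by
  simp [wsub, wsubBlock]

lemma wsub_singleton (b : Bool) : wsub [b] = wsubBlock b := by
  simp [wsub_cons, wsub_nil]

lemma count_true_wsubBlock (b : Bool) : (wsubBlock b).count true = 1 := by
  cases b <;> rfl

lemma count_true_take_wsubBlock {b : Bool} {n : ℕ} (hn : n < (wsubBlock b).length) :
    ((wsubBlock b).take n).count true = 0 := by
  cases b <;> simp [wsubBlock] at hn <;> interval_cases n <;> rfl

lemma count_true_wsub (S : List Bool) : (wsub S).count true = S.length := by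
  induction S with
  | nil => rfl
  | cons b S ih => simp [wsub_cons, count_true_wsubBlock, ih, add_comm]

lemma count_false_wsub (S : List Bool) : (wsub S).count false = S.length + S.count false := by
  induction S with
  | nil => rfl
  | cons b S ih =>
    cases b <;> simp [wsub_cons, wsubBlock, ih] <;> omega

/-- The image of the longest prefix of `S` whose image fits into `(wsub S).take n`. -/
lemma exists_wsub_take_le_take_wsub (S : List Bool) (n : ℕ) :
    ∃ k ≤ S.length,
      (wsub (S.take k)).count false ≤ ((wsub S).take n).count false ∧
      ((wsub S).take n).count true ≤ (wsub (S.take k)).count true := by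
  induction S generalizing n with
  | nil => exact ⟨0, le_rfl, by simp [wsub_nil]⟩
  | cons b S ih =>
    rw [wsub_cons, List.take_append]
    by_cases hn : n < (wsubBlock b).length
    · refine ⟨0, Nat.zero_le _, by simp [wsub_nil], ?_⟩
      simp [count_true_take_wsubBlock hn, Nat.sub_eq_zero_of_le hn.le]
    · obtain ⟨k, hk, hfalse, htrue⟩ := ih (n - (wsubBlock b).length)
      refine ⟨k + 1, by simpa using hk, ?_⟩
      rw [List.take_succ_cons, wsub_cons, List.take_of_length_le (l := wsubBlock b) (by omega)]
      simp only [List.count_append]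
      omega

/-- The image of the shortest prefix of `S` whose image contains `(wsub S).take n`. -/
lemma exists_take_wsub_le_wsub_take (S : List Bool) (n : ℕ) :
    ∃ k ≤ S.length,
      ((wsub S).take n).count false ≤ (wsub (S.take k)).count false ∧
      (wsub (S.take k)).count true ≤ ((wsub S).take n).count true + 1 := by
  induction S generalizing n with
  | nil => exact ⟨0, le_rfl, by simp [wsub_nil]⟩
  | cons b S ih =>
    rw [wsub_cons, List.take_append]
    by_cases hn : n < (wsubBlock b).length
    · refine ⟨1, by simp, ?_⟩
      simpa [wsub_singleton, count_true_wsubBlock, Nat.sub_eq_zero_of_le hn.le]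
        using (List.take_sublist n (wsubBlock b)).count_le false
    · obtain ⟨k, hk, hfalse, htrue⟩ := ih (n - (wsubBlock b).length)
      refine ⟨k + 1, by simpa using hk, ?_⟩
      rw [List.take_succ_cons, wsub_cons, List.take_of_length_le (l := wsubBlock b) (by omega)]
      simp only [List.count_append]
      omega

lemma count_take_wsub (S : List Bool) {k : ℕ} (hk : k ≤ S.length) :
    (wsub (S.take k)).count true = k ∧
      (wsub (S.take k)).count false = k + (S.take k).count false := by
  rw [count_true_wsub, count_false_wsub, List.length_take_of_le hk]
  exact ⟨rfl, rfl⟩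

lemma Below.of_wsub {S : List Bool} {x y : ℤ} (h : Below (wsub S) x y) :
    Below S (x - y - 1) (2 * y - x + 1) := by
  obtain ⟨n, -, hfalse, htrue⟩ := h
  obtain ⟨k, hk, hkfalse, hktrue⟩ := exists_wsub_take_le_take_wsub S n
  have hcount := List.count_true_add_count_false (S.take k)
  rw [List.length_take_of_le hk] at hcount
  obtain ⟨hwtrue, hwfalse⟩ := count_take_wsub S hk
  exact ⟨k, hk, by omega, by omega⟩

lemma Above.of_wsub {S : List Bool} {x y : ℤ} (h : Above (wsub S) x y) :
    Above S (x - y - 1) (2 * y - x + 1) := by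
  obtain ⟨n, -, htrue, hfalse⟩ := h
  obtain ⟨k, hk, hkfalse, hktrue⟩ := exists_take_wsub_le_wsub_take S n
  have hcount := List.count_true_add_count_false (S.take k)
  rw [List.length_take_of_le hk] at hcount
  obtain ⟨hwtrue, hwfalse⟩ := count_take_wsub S hk
  exact ⟨k, hk, by omega, by omega⟩

theorem between_of_between_wsub_general (S T : List Bool)
    (x y : ℤ) (h : Between (wsub S) (wsub T) x y) :
    Between S T (x - y - 1) (2 * y - x + 1) := by
  rcases h with ⟨hS, hT⟩ | ⟨hS, hT⟩
  · exact Or.inl ⟨hS.of_wsub, hT.of_wsub⟩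
  · exact Or.inr ⟨hS.of_wsub, hT.of_wsub⟩

/-- If `(x, y)` is between `w(S)` and `w(T)` for balanced bitstrings `S` and
`T`, then `(x − y − 1, 2y − x + 1)` is between `S` and `T`. -/
theorem between_of_between_wsub (S T : List Bool) (hbal : BalancedBits S T)
    (x y : ℤ) (h : Between (wsub S) (wsub T) x y) :
    Between S T (x - y - 1) (2 * y - x + 1) :=
  between_of_between_wsub_general S T x y h
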